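/- arXiv:math/0503398 — 6 statements merged into one kernel-verified Lean document; each statement's English description precedes it below -/
import Mathlib

section
/- Let (c_{l,μ,i₁,…,i_n}) be a finitely supported family of elements of L indexed by (n+2)-tuples (l,μ,i₁,…,i_n) of nonnegative integers. If the L-linear combination Σ c_{l,μ,i₁,…,i_n}·(τ^l ∘ d_s^μ ∘ Δ₁^{i₁} ∘ … ∘ Δ_n^{i_n}), formed in the L-vector space Maps(F̂_{n+1}, F̂_{n+1}), is the zero map on F̂_{n+1}, then every coefficient c_{l,μ,i₁,…,i_n} is zero. (Uniqueness of the canonical representation of elements of the Carlitz ring 𝔄_{n+1}.) -/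
/-!
Setting: `q = p ^ e`, `L` an algebraically closed field of characteristic `p`
containing `F_q(x)` (via the ring embedding `φ`), `root` the unique `q`-th root map
on `L`.  `CIdx n` indexes the basis monomials `e(m, k₁, …, k_n)` (with
`m ≤ min(k₁, …, k_n)`) of the space `F̂_{n+1} = CIdx n →₀ L` of `F_q`-linear
polynomials; `tauOp`, `dsOp`, `deltaOp` are the operators `τ`, `d_s`, `Δ_j`, and
`monOp` is the monomial operator `τ^l ∘ d_s^μ ∘ Δ₁^{i₁} ∘ … ∘ Δ_n^{i_n}`.
-/

/-- Index set of the monomial basis `e(m, k₁, …, k_n)` with `m ≤ min(k₁, …, k_n)`. -/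
def CIdx (n : ℕ) : Type := {v : ℕ × (Fin n → ℕ) // ∀ j, v.1 ≤ v.2 j}

/-- `(m, k⃗) ↦ (m+1, k⃗+1)`. -/
def shiftUp {n : ℕ} (i : CIdx n) : CIdx n :=
  ⟨(i.1.1 + 1, fun j => i.1.2 j + 1), fun j => Nat.succ_le_succ (i.2 j)⟩

/-- `(m, k⃗) ↦ (m-1, k⃗-1)` (truncated subtraction). -/
def shiftDown {n : ℕ} (i : CIdx n) : CIdx n :=
  ⟨(i.1.1 - 1, fun j => i.1.2 j - 1), fun j => Nat.sub_le_sub_right (i.2 j) 1⟩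

/-- The operator `τ` : `τ(a·e(m,k⃗)) = a^q · e(m+1, k⃗+1)`. -/
noncomputable def tauOp (L : Type) [Field L] (q n : ℕ) :
    (CIdx n →₀ L) → (CIdx n →₀ L) :=
  fun f => f.sum fun i a => Finsupp.single (shiftUp i) (a ^ q)

/-- The Carlitz derivative `d_s` : `d_s(a·e(m,k⃗)) = a^{1/q}·[m]^{1/q}·e(m-1,k⃗-1)`
(which vanishes for `m = 0` since `[0] = x^{q^0} - x = 0` and `root 0 = 0`). -/
noncomputable def dsOp (L : Type) [Field L] (root : L → L) (x : L) (q n : ℕ) :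
    (CIdx n →₀ L) → (CIdx n →₀ L) :=
  fun f => f.sum fun i a =>
    Finsupp.single (shiftDown i) (root (x ^ q ^ i.1.1 - x) * root a)

/-- The operator `Δ_j` : `Δ_j(a·e(m,k⃗)) = [k_j]·a·e(m,k⃗)`. -/
noncomputable def deltaOp (L : Type) [Field L] (x : L) (q n : ℕ) (j : Fin n) :
    (CIdx n →₀ L) → (CIdx n →₀ L) :=
  fun f => f.sum fun i a => Finsupp.single i ((x ^ q ^ i.1.2 j - x) * a)

/-- The monomial operator `τ^l ∘ d_s^μ ∘ Δ₁^{i₁} ∘ … ∘ Δ_n^{i_n}`. -/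
noncomputable def monOp (L : Type) [Field L] (root : L → L) (x : L) (q n : ℕ)
    (l μ : ℕ) (iv : Fin n → ℕ) : (CIdx n →₀ L) → (CIdx n →₀ L) :=
  (tauOp L q n)^[l] ∘ (dsOp L root x q n)^[μ] ∘
    (List.ofFn fun j : Fin n => (deltaOp L x q n j)^[iv j]).foldr (· ∘ ·) id

/-!
On a basis vector `e(μ, k⃗)` with all `k_j ≥ μ`, the monomial `τ^l' d_s^μ' Δ^{i⃗}` vanishes if
`μ' > μ`, while for `μ' = μ` it lands on `e(l', k⃗ - μ + l')` with coefficient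
`D^{q^l'} ∏ⱼ S(k_j)^{i_j}`, where `D ≠ 0` does not depend on `k⃗` and
`S(k) = (ρ^μ [k])^{q^l'}` with `ρ = (·)^{1/q}`, a field endomorphism. By induction on `μ` the terms
with smaller `μ'` are already known to vanish, so reading off the coordinate `e(l, k⃗ - μ + l)`
shows that the polynomial `∑_{i⃗} c_{l,μ,i⃗} ∏ⱼ Y_j^{i_j}` vanishes on the box
`{S(k) : k ≥ μ}ⁿ`, which is infinite because `x` is transcendental; hence its coefficients vanish.
-/

open Function

theorem coeff_eq_zero_of_forall_sum_mul_prod_pow_eq_zero {σ K : Type*} [Fintype σ] [CommRing K]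
    [IsDomain K] {s : Set K} (hs : s.Infinite) {T : Finset (σ → ℕ)} {b : (σ → ℕ) → K}
    (h : ∀ y : σ → K, (∀ j, y j ∈ s) → ∑ i ∈ T, b i * ∏ j, y j ^ i j = 0) :
    ∀ i ∈ T, b i = 0 := by
  classical
  set P : MvPolynomial σ K :=
    ∑ i ∈ T, MvPolynomial.monomial (Finsupp.equivFunOnFinite.symm i) (b i)
  have hP : P = 0 := by
    refine MvPolynomial.funext_set (fun _ => s) (fun _ => hs) fun y hy => ?_
    rw [map_zero, ← h y (Set.mem_univ_pi.1 hy), map_sum]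
    refine Finset.sum_congr rfl fun i _ => ?_
    rw [MvPolynomial.eval_monomial, Finsupp.prod_fintype _ _ fun _ => pow_zero _]
    rfl
  intro i hi
  simpa [P, MvPolynomial.coeff_sum, MvPolynomial.coeff_monomial, hi] using
    congrArg (MvPolynomial.coeff (Finsupp.equivFunOnFinite.symm i)) hP

theorem RatFunc.X_pow_injective (K : Type*) [Field K] :
    Injective fun m : ℕ => (RatFunc.X : RatFunc K) ^ m := by
  intro a b hab
  simp only [← RatFunc.algebraMap_X, ← map_pow] at hab
  simpa using congrArg Polynomial.natDegree (RatFunc.algebraMap_injective K hab)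

theorem RingHom.exists_coe_eq_of_rightInverse {L : Type*} [Field L] (F : L →+* L) {g : L → L}
    (hg : RightInverse g F) : ∃ ρ : L →+* L, ⇑ρ = g := by
  let e : L ≃+* L := RingEquiv.ofBijective F ⟨F.injective, hg.surjective⟩
  exact ⟨e.symm, funext fun a => F.injective ((e.apply_symm_apply a).trans (hg a).symm)⟩

section CarlitzOperators

variable {L : Type} [Field L] {q n : ℕ} {x : L}

def CIdx.of (m : ℕ) (k : Fin n → ℕ) (h : ∀ j, m ≤ k j) : CIdx n := ⟨(m, k), h⟩

theorem CIdx.of_val (m : ℕ) (k : Fin n → ℕ) (h : ∀ j, m ≤ k j) : (CIdx.of m k h).1 = (m, k) :=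
  rfl

theorem shiftDown_of (m : ℕ) (k : Fin n → ℕ) (h : ∀ j, m + 1 ≤ k j) :
    shiftDown (CIdx.of (m + 1) k h) =
      CIdx.of m (fun j => k j - 1) (fun j => Nat.le_sub_one_of_lt (h j)) :=
  rfl

theorem shiftUp_iterate_fst (l : ℕ) (i : CIdx n) : (shiftUp^[l] i).1.1 = i.1.1 + l := by
  induction l with
  | zero => rfl
  | succ l ih => rw [iterate_succ_apply', ← add_assoc, ← ih]; rfl

theorem tauOp_single (hq : q ≠ 0) (i : CIdx n) (a : L) :
    tauOp L q n (Finsupp.single i a) = Finsupp.single (shiftUp i) (a ^ q) :=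
  Finsupp.sum_single_index (by rw [zero_pow hq, Finsupp.single_zero])

theorem tauOp_iterate_single (hq : q ≠ 0) (l : ℕ) (i : CIdx n) (a : L) :
    (tauOp L q n)^[l] (Finsupp.single i a) = Finsupp.single (shiftUp^[l] i) (a ^ q ^ l) := by
  induction l generalizing i a with
  | zero => simp
  | succ l ih => rw [iterate_succ_apply, tauOp_single hq, ih, iterate_succ_apply, ← pow_mul,
      ← pow_succ']

theorem deltaOp_single (j : Fin n) (i : CIdx n) (a : L) :
    deltaOp L x q n j (Finsupp.single i a) =
      Finsupp.single i ((x ^ q ^ i.1.2 j - x) * a) :=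
  Finsupp.sum_single_index (by rw [mul_zero, Finsupp.single_zero])

theorem deltaOp_iterate_single (j : Fin n) (r : ℕ) (i : CIdx n) (a : L) :
    (deltaOp L x q n j)^[r] (Finsupp.single i a) =
      Finsupp.single i ((x ^ q ^ i.1.2 j - x) ^ r * a) := by
  induction r with
  | zero => simp
  | succ r ih => rw [iterate_succ_apply', ih, deltaOp_single, pow_succ', mul_assoc]

theorem foldr_map_deltaOp_iterate_single (iv : Fin n → ℕ) (js : List (Fin n)) (i : CIdx n)
    (a : L) :
    (js.map fun j => (deltaOp L x q n j)^[iv j]).foldr (· ∘ ·) id (Finsupp.single i a) =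
      Finsupp.single i ((js.map fun j => (x ^ q ^ i.1.2 j - x) ^ iv j).prod * a) := by
  induction js with
  | nil => simp
  | cons j js ih =>
    simp only [List.map_cons, List.foldr_cons, comp_apply, ih, deltaOp_iterate_single,
      List.prod_cons, mul_assoc]

theorem foldr_ofFn_deltaOp_iterate_single (iv : Fin n → ℕ) (i : CIdx n) (a : L) :
    (List.ofFn fun j => (deltaOp L x q n j)^[iv j]).foldr (· ∘ ·) id (Finsupp.single i a) =
      Finsupp.single i ((∏ j, (x ^ q ^ i.1.2 j - x) ^ iv j) * a) := by
  rw [List.ofFn_eq_map, foldr_map_deltaOp_iterate_single, ← Fin.prod_univ_def]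

variable (ρ : L →+* L)

theorem dsOp_single (i : CIdx n) (a : L) :
    dsOp L ρ x q n (Finsupp.single i a) =
      Finsupp.single (shiftDown i) (ρ (x ^ q ^ i.1.1 - x) * ρ a) :=
  Finsupp.sum_single_index (by rw [map_zero, mul_zero, Finsupp.single_zero])

theorem dsOp_iterate_zero (μ : ℕ) : (dsOp L ρ x q n)^[μ] 0 = 0 :=
  iterate_fixed Finsupp.sum_zero_index μ

theorem dsOp_iterate_single_of_lt : ∀ {m μ : ℕ}, m < μ → ∀ (k : Fin n → ℕ)
    (h : ∀ j, m ≤ k j) (a : L), (dsOp L ρ x q n)^[μ] (Finsupp.single (CIdx.of m k h) a) = 0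
  | 0, μ + 1, _, k, h, a => by
    rw [iterate_succ_apply, dsOp_single]
    simp only [CIdx.of_val, pow_zero, pow_one, sub_self, map_zero, zero_mul, Finsupp.single_zero,
      dsOp_iterate_zero]
  | m + 1, μ + 1, hlt, k, h, a => by
    rw [iterate_succ_apply, dsOp_single, shiftDown_of]
    exact dsOp_iterate_single_of_lt (by omega) _ _ _

theorem dsOp_iterate_single_self : ∀ (m : ℕ) (k : Fin n → ℕ) (h : ∀ j, m ≤ k j) (a : L),
    (dsOp L ρ x q n)^[m] (Finsupp.single (CIdx.of m k h) a) =
      Finsupp.single (CIdx.of 0 (fun j => k j - m) fun _ => Nat.zero_le _)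
        ((ρ ^ m) a * ∏ i ∈ Finset.range m, (ρ ^ (i + 1)) (x ^ q ^ (i + 1) - x))
  | 0, k, h, a => by simp
  | m + 1, k, h, a => by
    rw [iterate_succ_apply, dsOp_single, shiftDown_of, dsOp_iterate_single_self]
    congr 1
    · congr 1
      exact funext fun j => by rw [Nat.sub_sub, Nat.add_comm]
    · simp only [CIdx.of_val, Finset.prod_range_succ, pow_succ, RingHom.mul_def,
        RingHom.comp_apply, map_mul]
      ring

theorem eq_of_shiftUp_iterate_eq {l l' : ℕ} {i : CIdx n} (h : shiftUp^[l] i = shiftUp^[l'] i) :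
    l = l' := by
  simpa [shiftUp_iterate_fst] using congrArg (fun j : CIdx n => j.1.1) h

theorem monOp_single_of_lt {m μ : ℕ} (hlt : m < μ) (l : ℕ) (iv : Fin n → ℕ) (k : Fin n → ℕ)
    (h : ∀ j, m ≤ k j) (a : L) :
    monOp L ρ x q n l μ iv (Finsupp.single (CIdx.of m k h) a) = 0 := by
  simp only [monOp, comp_apply]
  rw [foldr_ofFn_deltaOp_iterate_single, dsOp_iterate_single_of_lt ρ hlt,
    iterate_fixed Finsupp.sum_zero_index l]

theorem monOp_single_self (hq : q ≠ 0) (l m : ℕ) (iv : Fin n → ℕ) (k : Fin n → ℕ)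
    (h : ∀ j, m ≤ k j) (a : L) :
    monOp L ρ x q n l m iv (Finsupp.single (CIdx.of m k h) a) =
      Finsupp.single (shiftUp^[l] (CIdx.of 0 (fun j => k j - m) fun _ => Nat.zero_le _))
        (((ρ ^ m) ((∏ j, (x ^ q ^ k j - x) ^ iv j) * a) *
          ∏ i ∈ Finset.range m, (ρ ^ (i + 1)) (x ^ q ^ (i + 1) - x)) ^ q ^ l) := by
  simp only [monOp, comp_apply]
  rw [foldr_ofFn_deltaOp_iterate_single, dsOp_iterate_single_self, tauOp_iterate_single hq]
  rfl

theorem slice_injective (l μ : ℕ) : Injective fun iv : Fin n → ℕ => (l, μ, iv) :=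
  (Prod.mk_right_injective l).comp (Prod.mk_right_injective μ)

theorem sum_smul_monOp_single_apply (hq : q ≠ 0) (c : (ℕ × ℕ × (Fin n → ℕ)) →₀ L) {μ : ℕ}
    (hlow : ∀ μ' < μ, ∀ l iv, c (l, μ', iv) = 0) (k : Fin n → ℕ) (hk : ∀ j, μ ≤ k j) (l : ℕ) :
    (c.sum fun t a => a • monOp L ρ x q n t.1 t.2.1 t.2.2 (Finsupp.single (CIdx.of μ k hk) 1))
        (shiftUp^[l] (CIdx.of 0 (fun j => k j - μ) fun _ => Nat.zero_le _)) =
      ∑ iv ∈ c.support.preimage _ (slice_injective l μ).injOn, c (l, μ, iv) *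
        ((ρ ^ μ) (∏ j, (x ^ q ^ k j - x) ^ iv j) *
          ∏ i ∈ Finset.range μ, (ρ ^ (i + 1)) (x ^ q ^ (i + 1) - x)) ^ q ^ l := by
  rw [Finsupp.sum_apply, Finsupp.sum, ← Finset.sum_preimage _ _ (slice_injective l μ).injOn]
  · refine Finset.sum_congr rfl fun iv _ => ?_
    rw [Finsupp.smul_apply, monOp_single_self ρ hq, mul_one, Finsupp.single_eq_same, smul_eq_mul]
  · rintro ⟨l', μ', iv'⟩ - hslice
    rw [Finsupp.smul_apply, smul_eq_mul]
    rcases lt_trichotomy μ' μ with hlt | rfl | hgt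
    · rw [hlow μ' hlt, zero_mul]
    · rw [monOp_single_self ρ hq, Finsupp.single_eq_of_ne, mul_zero]
      intro h
      obtain rfl := eq_of_shiftUp_iterate_eq h
      exact hslice ⟨iv', rfl⟩
    · rw [monOp_single_of_lt ρ hgt, Finsupp.zero_apply, mul_zero]

theorem coeff_eq_zero_of_sum_smul_monOp_eq_zero (hfrob : Injective fun y : L => y ^ q)
    (hx : Injective fun k : ℕ => x ^ q ^ k - x) (c : (ℕ × ℕ × (Fin n → ℕ)) →₀ L)
    (hzero : ∀ f : CIdx n →₀ L, (c.sum fun t a => a • monOp L ρ x q n t.1 t.2.1 t.2.2 f) = 0)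
    {μ : ℕ} (hlow : ∀ μ' < μ, ∀ l iv, c (l, μ', iv) = 0) (l : ℕ) (iv : Fin n → ℕ) :
    c (l, μ, iv) = 0 := by
  have hq : q ≠ 0 := by
    rintro rfl
    exact zero_ne_one (hfrob (by simp : (0 : L) ^ 0 = 1 ^ 0))
  set D := ∏ i ∈ Finset.range μ, (ρ ^ (i + 1)) (x ^ q ^ (i + 1) - x)
  set S : ℕ → L := fun k => (ρ ^ μ) (x ^ q ^ k - x) ^ q ^ l
  have hD : D ^ q ^ l ≠ 0 := by
    refine pow_ne_zero _ (Finset.prod_ne_zero_iff.2 fun i _ => (map_ne_zero _).2 fun h0 => ?_)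
    exact hx.ne (Nat.succ_ne_zero i) (h0.trans (by simp))
  have hS : Injective S := by
    have hpow : Injective fun y : L => y ^ q ^ l := pow_iterate (M := L) q l ▸ hfrob.iterate l
    exact hpow.comp ((ρ ^ μ).injective.comp hx)
  have hbox : ∀ k : Fin n → ℕ, (∀ j, μ ≤ k j) →
      ∑ iv ∈ c.support.preimage _ (slice_injective l μ).injOn,
        c (l, μ, iv) * ∏ j, S (k j) ^ iv j = 0 := by
    intro k hk
    have hcoord := DFunLike.congr_fun (hzero (Finsupp.single (CIdx.of μ k hk) 1))
      (shiftUp^[l] (CIdx.of 0 (fun j => k j - μ) fun _ => Nat.zero_le _))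
    rw [sum_smul_monOp_single_apply ρ hq c hlow, Finsupp.zero_apply] at hcoord
    refine (mul_eq_zero.1 ?_).resolve_right hD
    rw [Finset.sum_mul, ← hcoord]
    refine Finset.sum_congr rfl fun iv _ => ?_
    simp only [S, D, map_prod, map_pow, mul_pow, ← Finset.prod_pow, ← pow_mul, mul_comm (iv _),
      mul_assoc]
  have hcoeff := coeff_eq_zero_of_forall_sum_mul_prod_pow_eq_zero
    ((Set.Ici_infinite μ).image hS.injOn) fun y hy => by
      choose k hk hyk using hy
      obtain rfl : y = fun j => S (k j) := funext fun j => (hyk j).symm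
      exact hbox k hk
  by_contra hne
  exact hne (hcoeff iv (Finset.mem_preimage.2 (Finsupp.mem_support_iff.2 hne)))

theorem eq_zero_of_sum_smul_monOp_eq_zero (hfrob : Injective fun y : L => y ^ q)
    (hx : Injective fun k : ℕ => x ^ q ^ k - x) (c : (ℕ × ℕ × (Fin n → ℕ)) →₀ L)
    (hzero : ∀ f : CIdx n →₀ L, (c.sum fun t a => a • monOp L ρ x q n t.1 t.2.1 t.2.2 f) = 0) :
    c = 0 := by
  suffices ∀ μ l iv, c (l, μ, iv) = 0 from Finsupp.ext fun t => this t.2.1 t.1 t.2.2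
  intro μ
  induction μ using Nat.strong_induction_on with
  | _ μ ih => exact coeff_eq_zero_of_sum_smul_monOp_eq_zero ρ hfrob hx c hzero ih

end CarlitzOperators

theorem carlitz_monomials_unique_general
    (p e q : ℕ) [Fact p.Prime] (he : 0 < e) (hq : q = p ^ e)
    (L : Type) [Field L] [CharP L p]
    (φ : RatFunc (GaloisField p e) →+* L)
    (root : L → L) (hroot1 : ∀ c, root c ^ q = c)
    (n : ℕ) (c : (ℕ × ℕ × (Fin n → ℕ)) →₀ L)
    (hzero : ∀ f : CIdx n →₀ L,
      (c.sum fun t a =>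
        a • monOp L root (φ RatFunc.X) q n t.1 t.2.1 t.2.2 f) = 0) :
    c = 0 := by
  have hfrob : ⇑(iterateFrobenius L p e) = fun y => y ^ q := by
    funext y
    rw [iterateFrobenius_def, hq]
  obtain ⟨ρ, rfl⟩ := (iterateFrobenius L p e).exists_coe_eq_of_rightInverse (g := root)
    fun y => (congrFun hfrob _).trans (hroot1 y)
  have hq2 : 2 ≤ q := hq ▸ Nat.one_lt_pow he.ne' (Fact.out : p.Prime).one_lt
  have hx : Injective fun k : ℕ => φ RatFunc.X ^ q ^ k - φ RatFunc.X := by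
    refine sub_left_injective.comp fun a b hab => Nat.pow_right_injective hq2 ?_
    exact RatFunc.X_pow_injective _ (φ.injective (by simpa only [map_pow] using hab))
  exact eq_zero_of_sum_smul_monOp_eq_zero ρ (hfrob ▸ (iterateFrobenius L p e).injective) hx c
    hzero

/-- **Uniqueness of the canonical representation in the Carlitz ring.**
If a finitely supported `L`-linear combination of the monomial operators
`τ^l ∘ d_s^μ ∘ Δ₁^{i₁} ∘ … ∘ Δ_n^{i_n}` vanishes on all of `F̂_{n+1}`, then all
its coefficients vanish. -/
theorem carlitz_monomials_unique
    (p e q : ℕ) [Fact p.Prime] (he : 0 < e) (hq : q = p ^ e)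
    (L : Type) [Field L] [IsAlgClosed L] [CharP L p]
    (φ : RatFunc (GaloisField p e) →+* L)
    (root : L → L) (hroot1 : ∀ c, root c ^ q = c) (hroot2 : ∀ c, root (c ^ q) = c)
    (n : ℕ) (c : (ℕ × ℕ × (Fin n → ℕ)) →₀ L)
    (hzero : ∀ f : CIdx n →₀ L,
      (c.sum fun t a =>
        a • monOp L root (φ RatFunc.X) q n t.1 t.2.1 t.2.2 f) = 0) :
    c = 0 :=
  carlitz_monomials_unique_general p e q he hq L φ root hroot1 n c hzero
end

section
/- For every integer k ≥ 1 there exists a representation of the Carlitz ring relations on the L-vector space V = L^k: additive maps T, D : L^k → L^k satisfying T(c·v) = c^q·T(v) and D(c·v) = c^{1/q}·D(v) for all c ∈ L and v ∈ L^k, and D∘T − T∘D = ρ·id. In particular, for every k = 1, 2, … the Carlitz ring 𝔄₁ has a nontrivial module of L-dimension exactly k. -/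
/-- **Finite-dimensional representations of the Carlitz ring (Theorem 1 (i)).**
Here `q = p ^ e`, `L` is an algebraically closed field of characteristic `p`
containing `F_q(x)` (via `φ`), `root` is the unique `q`-th root map on `L`, and
`ρ = root (x^q - x) = [1]^{1/q}`.  For every `k ≥ 1` there are additive maps
`T, D : L^k → L^k` with `T (c•v) = c^q • T v`, `D (c•v) = c^{1/q} • D v` and
`D∘T − T∘D = ρ·id`; thus the Carlitz ring `𝔄₁` has a nontrivial module of
`L`-dimension exactly `k`. -/
theorem carlitz_finite_dimensional_module
    (p e q : ℕ) [Fact p.Prime] (he : 0 < e) (hq : q = p ^ e)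
    (L : Type) [Field L] [IsAlgClosed L] [CharP L p]
    (φ : RatFunc (GaloisField p e) →+* L)
    (root : L → L) (hroot1 : ∀ c, root c ^ q = c) (hroot2 : ∀ c, root (c ^ q) = c)
    (k : ℕ) (hk : 1 ≤ k) :
    ∃ T D : (Fin k → L) → (Fin k → L),
      (∀ v w, T (v + w) = T v + T w) ∧
      (∀ v w, D (v + w) = D v + D w) ∧
      (∀ (c : L) (v : Fin k → L), T (c • v) = c ^ q • T v) ∧
      (∀ (c : L) (v : Fin k → L), D (c • v) = root c • D v) ∧
      (∀ v : Fin k → L, D (T v) - T (D v) =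
        root (φ RatFunc.X ^ q - φ RatFunc.X) • v) := by
  set ρ : L := root (φ RatFunc.X ^ q - φ RatFunc.X) with hρ
  have hp : p.Prime := Fact.out
  have hq2 : 2 ≤ q := by
    rw [hq]
    calc 2 ≤ p := hp.two_le
    _ ≤ p ^ e := Nat.le_self_pow he.ne' p
  -- Frobenius x ↦ x^q is injective (root is a left inverse)
  have hpowinj : ∀ a b : L, a ^ q = b ^ q → a = b := by
    intro a b h
    have := congrArg root h
    rwa [hroot2, hroot2] at this
  -- root is additive and multiplicative
  have hexp : ExpChar L p := ExpChar.prime hp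
  have hadd : ∀ a b : L, root (a + b) = root a + root b := by
    intro a b
    apply hpowinj
    rw [hroot1, hq, add_pow_char_pow, ← hq, hroot1, hroot1]
  have hmul : ∀ a b : L, root (a * b) = root a * root b := by
    intro a b
    apply hpowinj
    rw [hroot1, mul_pow, hroot1, hroot1]
  -- find d with d - d^q = ρ
  obtain ⟨d, hd⟩ : ∃ d : L, d - d ^ q = ρ := by
    have hdeg : (Polynomial.X ^ q + (Polynomial.C ρ - Polynomial.X) : Polynomial L).degree ≠ 0 := by
      have h1 : (Polynomial.C ρ - Polynomial.X : Polynomial L).degree < (Polynomial.X ^ q : Polynomial L).degree := by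
        rw [Polynomial.degree_X_pow]
        refine lt_of_le_of_lt (Polynomial.degree_sub_le _ _) ?_
        simp only [Polynomial.degree_X, Polynomial.degree_C_le]
        refine max_lt (lt_of_le_of_lt Polynomial.degree_C_le ?_) ?_ <;>
          · exact_mod_cast by omega
      rw [Polynomial.degree_add_eq_left_of_degree_lt h1, Polynomial.degree_X_pow]
      exact_mod_cast by omega
    obtain ⟨z, hz⟩ := IsAlgClosed.exists_root _ hdeg
    refine ⟨z, ?_⟩
    have hz' : z ^ q + (ρ - z) = 0 := by
      simpa [Polynomial.IsRoot, Polynomial.eval_pow] using hz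
    linear_combination -hz'
  refine ⟨fun v i => (v i) ^ q, fun v i => d * root (v i), ?_, ?_, ?_, ?_, ?_⟩
  · intro v w; funext i
    simp only [Pi.add_apply, hq, add_pow_char_pow]
  · intro v w; funext i
    simp only [Pi.add_apply, hadd, mul_add]
  · intro c v; funext i
    simp [mul_pow]
  · intro c v; funext i
    simp only [Pi.smul_apply, smul_eq_mul, hmul]; ring
  · intro v; funext i
    simp only [Pi.sub_apply, Pi.smul_apply, smul_eq_mul, hroot2, mul_pow, hroot1]
    linear_combination (v i) * hd
end

section
/- Let T, D be a representation of the Carlitz ring relations on an L-vector space V, and suppose there exists a ''vacuum vector'' v ∈ V such that D(v) = 0 and T^m(v) ≠ 0 for all m = 0, 1, 2, …. Then the vectors {T^m(v) : m ≥ 0} are linearly independent over L (each T^{m−1}(v) is an eigenvector of the L-linear operator D∘T with eigenvalue [m]^{1/q}, and these eigenvalues are pairwise distinct); in particular V is infinite-dimensional over L. -/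
/-- **Modules with a vacuum vector are infinite-dimensional (Theorem 1 (ii)).**
Here `q = p ^ e`, `L` is an algebraically closed field of characteristic `p`
containing `F_q(x)` (via `φ`), `root` is the unique `q`-th root map on `L`, and
`ρ = root (x^q - x) = [1]^{1/q}`.  If `T, D` is a representation of the Carlitz
ring relations on an `L`-vector space `V` and there is a vacuum vector `v` with
`D v = 0` and `T^[m] v ≠ 0` for all `m`, then the vectors `T^[m] v` are linearly
independent over `L`; in particular `V` is infinite-dimensional. -/
theorem carlitz_vacuum_linearIndependent
    (p e q : ℕ) [Fact p.Prime] (he : 0 < e) (hq : q = p ^ e)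
    (L : Type) [Field L] [IsAlgClosed L] [CharP L p]
    (φ : RatFunc (GaloisField p e) →+* L)
    (root : L → L) (hroot1 : ∀ c, root c ^ q = c) (hroot2 : ∀ c, root (c ^ q) = c)
    (V : Type) [AddCommGroup V] [Module L V]
    (T D : V → V)
    (hTadd : ∀ v w, T (v + w) = T v + T w)
    (hDadd : ∀ v w, D (v + w) = D v + D w)
    (hT : ∀ (c : L) (v : V), T (c • v) = c ^ q • T v)
    (hD : ∀ (c : L) (v : V), D (c • v) = root c • D v)
    (hcomm : ∀ v : V, D (T v) - T (D v) =
      root (φ RatFunc.X ^ q - φ RatFunc.X) • v)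
    (v : V) (hv : D v = 0) (hnz : ∀ m : ℕ, T^[m] v ≠ 0) :
    LinearIndependent L (fun m : ℕ => T^[m] v) ∧ ¬ Module.Finite L V := by
  have hq1 : 1 < q := by
    rw [hq]; exact Nat.one_lt_pow he.ne' (Nat.Prime.one_lt Fact.out)
  -- q-th power in L via characteristic p
  have hpowq : ∀ a b : L, (a - b) ^ q = a ^ q - b ^ q := by
    intro a b; rw [hq]; exact sub_pow_char_pow (R := L) a b e
  have hpowq' : ∀ a b : L, (a + b) ^ q = a ^ q + b ^ q := by
    intro a b; rw [hq]; exact add_pow_char_pow (R := L) a b p e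
  have hT0 : T 0 = 0 := by
    have := hTadd 0 0; rw [add_zero] at this; exact left_eq_add.mp this
  -- the commutation in "solved" form
  have hcomm' : ∀ w : V, D (T w) = T (D w) +
      root (φ RatFunc.X ^ q - φ RatFunc.X) • w := by
    intro w; have := hcomm w; linear_combination (norm := abel) this
  -- eigenvalues
  set μ : ℕ → L := fun m => root (φ RatFunc.X ^ q ^ (m + 1) - φ RatFunc.X) with hμ
  -- key computation : D (T^[m+1] v) = μ m • T^[m] v
  have key : ∀ m : ℕ, D (T^[m + 1] v) = μ m • T^[m] v := by
    intro m
    induction m with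
    | zero =>
      simp only [zero_add, Function.iterate_one, Function.iterate_zero, id_eq]
      rw [hcomm' v, hv, hT0, zero_add]
      have : μ 0 = root (φ RatFunc.X ^ q - φ RatFunc.X) := by
        simp [hμ]
      rw [this]
    | succ n ih =>
      rw [Function.iterate_succ_apply' T (n + 1) v, hcomm', ih, hT,
        ← Function.iterate_succ_apply' T n v, ← add_smul]
      congr 1
      have h1 : μ n ^ q = φ RatFunc.X ^ q ^ (n + 1) - φ RatFunc.X := hroot1 _
      have : (μ n ^ q + root (φ RatFunc.X ^ q - φ RatFunc.X)) ^ q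
          = φ RatFunc.X ^ q ^ (n + 2) - φ RatFunc.X := by
        rw [hpowq', h1, hroot1, hpowq, ← pow_mul, ← pow_succ]
        ring
      calc μ n ^ q + root (φ RatFunc.X ^ q - φ RatFunc.X)
          = root ((μ n ^ q + root (φ RatFunc.X ^ q - φ RatFunc.X)) ^ q) :=
            (hroot2 _).symm
        _ = μ (n + 1) := by rw [this]
  -- μ is injective
  have hμinj : Function.Injective μ := by
    intro m n h
    have h2 : φ RatFunc.X ^ q ^ (m + 1) - φ RatFunc.X
        = φ RatFunc.X ^ q ^ (n + 1) - φ RatFunc.X := by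
      have := congrArg (· ^ q) h
      simpa only [hμ, hroot1] using this
    have h3 : φ (RatFunc.X ^ q ^ (m + 1)) = φ (RatFunc.X ^ q ^ (n + 1)) := by
      simp only [map_pow]
      exact sub_left_injective h2
    have h4 : (RatFunc.X : RatFunc (GaloisField p e)) ^ q ^ (m + 1)
        = RatFunc.X ^ q ^ (n + 1) := φ.injective h3
    have h5 : (Polynomial.X : Polynomial (GaloisField p e)) ^ q ^ (m + 1)
        = Polynomial.X ^ q ^ (n + 1) := by
      apply RatFunc.algebraMap_injective (GaloisField p e)
      simpa only [map_pow, RatFunc.algebraMap_X] using h4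
    have h6 : q ^ (m + 1) = q ^ (n + 1) := by
      have := congrArg Polynomial.natDegree h5
      simpa using this
    have := Nat.pow_right_injective hq1 h6
    omega
  -- the L-linear operator D ∘ T
  let f : Module.End L V :=
    { toFun := fun w => D (T w)
      map_add' := fun a b => show D (T (a + b)) = D (T a) + D (T b) by
        rw [hTadd, hDadd]
      map_smul' := fun c w => show D (T (c • w)) = c • D (T w) by
        rw [hT, hD, hroot2]
      }
  have heig : ∀ m : ℕ, f.HasEigenvector (μ m) (T^[m] v) := by
    intro m
    refine ⟨?_, hnz m⟩
    rw [Module.End.mem_eigenspace_iff]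
    show D (T (T^[m] v)) = μ m • T^[m] v
    rw [← Function.iterate_succ_apply' T m v]
    exact key m
  have hli : LinearIndependent L (fun m : ℕ => T^[m] v) :=
    f.eigenvectors_linearIndependent' μ hμinj _ heig
  refine ⟨hli, fun hfin => ?_⟩
  exact Module.Finite.not_linearIndependent_of_infinite (fun m : ℕ => T^[m] v) hli
end

section
/- For every monic irreducible polynomial π ∈ F_q[x] and all integers 0 ≤ m ≤ k, the K-binomial coefficient satisfies |binom(k,m)_K|_π ≤ 1; equivalently, v_π(binom(k,m)_K) ≥ 0, i.e., binom(k,m)_K is integral at every place of F_q(x) corresponding to a monic irreducible polynomial. -/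
noncomputable section

open Polynomial

/-- The Carlitz factorial `D_i = [i]·[i-1]^q ⋯ [1]^{q^{i-1}} ∈ F_q[x]`
(where `[i] = x^{q^i} - x`), defined via `D_0 = 1`, `D_{i+1} = [i+1]·D_i^q`. -/
def Dcar (q : ℕ) (F : Type) [Field F] : ℕ → Polynomial F
  | 0 => 1
  | i + 1 => (X ^ q ^ (i + 1) - X) * (Dcar q F i) ^ q

/-- `L_i = [i]·[i-1] ⋯ [1] ∈ F_q[x]`, via `L_0 = 1`, `L_{i+1} = [i+1]·L_i`. -/
def Lcar (q : ℕ) (F : Type) [Field F] : ℕ → Polynomial F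
  | 0 => 1
  | i + 1 => (X ^ q ^ (i + 1) - X) * Lcar q F i

/-- The `K`-binomial coefficient `binom(k,m)_K = D_k/(D_m · D_{k-m}^{q^m}) ∈ F_q(x)`
for `0 ≤ m ≤ k`, with the convention that it vanishes for `m < 0` or `m > k`. -/
def Kb (q : ℕ) (F : Type) [Field F] (k : ℕ) (m : ℤ) : RatFunc F :=
  if 0 ≤ m ∧ m ≤ (k : ℤ) then
    algebraMap (Polynomial F) (RatFunc F) (Dcar q F k) /
      (algebraMap (Polynomial F) (RatFunc F) (Dcar q F m.toNat) *
        algebraMap (Polynomial F) (RatFunc F) (Dcar q F (k - m.toNat)) ^ q ^ m.toNat)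
  else 0

/-- The `π`-adic additive valuation `v_π` on `F_q(x)`, normalized by `v_π(π) = 1`
(for `π` irreducible): the multiplicity of `π` in the numerator minus the
multiplicity of `π` in the denominator. -/
def vpol {F : Type} [Field F] (π : Polynomial F) (t : RatFunc F) : ℤ :=
  (multiplicity π t.num : ℤ) - (multiplicity π t.denom : ℤ)

/-! For an irreducible `π` of degree `δ` over `F_q`, `[i] = x^{q^i} - x` is separable and its
irreducible factors are exactly those of degree dividing `i`, so `v_π [i]` is `1` if `δ ∣ i` and `0`
otherwise. Hence `s i := v_π(D_i)` obeys `s (i + 1) = [δ ∣ i + 1] + q · s i`, which unwinds to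
`s i = 0` for `i < δ` and `s (i + δ) = q^i + s i`. Peeling periods `δ` off `b` then gives
`s a + q^a · s b ≤ s (a + b)`, and this is `v_π binom(a + b, a)_K ≥ 0`. -/

/-- `carlitzVal q δ i` is `v_π(D_i)` for an irreducible `π` of degree `δ` over `F_q`. -/
def carlitzVal (q δ : ℕ) : ℕ → ℕ
  | 0 => 0
  | i + 1 => (if δ ∣ i + 1 then 1 else 0) + q * carlitzVal q δ i

section carlitzVal

variable {q δ : ℕ}

theorem carlitzVal_eq_zero_of_lt {i : ℕ} (hi : i < δ) : carlitzVal q δ i = 0 := by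
  induction i with
  | zero => rfl
  | succ i ih =>
    simp [carlitzVal, Nat.not_dvd_of_pos_of_lt i.succ_pos hi, ih (by omega)]

theorem carlitzVal_add_self (hδ : 0 < δ) (i : ℕ) :
    carlitzVal q δ (i + δ) = q ^ i + carlitzVal q δ i := by
  induction i with
  | zero =>
    obtain ⟨d, rfl⟩ : ∃ d, δ = d + 1 := ⟨δ - 1, by omega⟩
    simp [carlitzVal, carlitzVal_eq_zero_of_lt d.lt_succ_self]
  | succ i ih =>
    rw [Nat.add_right_comm, carlitzVal, ih, carlitzVal, Nat.add_right_comm]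
    simp only [Nat.dvd_add_self_right]
    ring

theorem carlitzVal_mono (hq : 0 < q) : Monotone (carlitzVal q δ) :=
  monotone_nat_of_le_succ fun _ =>
    (Nat.le_mul_of_pos_left _ hq).trans (Nat.le_add_left _ _)

theorem carlitzVal_add_le (hq : 0 < q) (hδ : 0 < δ) (a b : ℕ) :
    carlitzVal q δ a + q ^ a * carlitzVal q δ b ≤ carlitzVal q δ (a + b) := by
  induction b using Nat.strong_induction_on with
  | _ b ih =>
  rcases lt_or_ge b δ with hb | hb
  · simpa [carlitzVal_eq_zero_of_lt hb] using carlitzVal_mono hq (Nat.le_add_right a b)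
  · obtain ⟨c, rfl⟩ := Nat.exists_eq_add_of_le' hb
    have hc := ih c (by omega)
    rw [carlitzVal_add_self hδ, ← add_assoc, carlitzVal_add_self hδ, pow_add]
    linarith

end carlitzVal

theorem Dcar_ne_zero {F : Type} [Field F] {q : ℕ} (hq : 1 < q) (i : ℕ) : Dcar q F i ≠ 0 := by
  induction i with
  | zero => exact one_ne_zero
  | succ i ih =>
    exact mul_ne_zero (FiniteField.X_pow_card_pow_sub_X_ne_zero F i.succ_ne_zero hq)
      (pow_ne_zero _ ih)

section FiniteField

variable {K : Type} [Field K] [Finite K]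

theorem separable_X_pow_natCard_pow_sub_X {n : ℕ} (hn : n ≠ 0) :
    (X ^ Nat.card K ^ n - X : K[X]).Separable := by
  have := Fintype.ofFinite K
  have hchar : ringChar K ∣ Nat.card K :=
    ringChar.dvd (by rw [Nat.card_eq_fintype_card, Nat.cast_card_eq_zero])
  exact galois_poly_separable (ringChar K) _ (dvd_pow hchar hn)

theorem multiplicity_X_pow_natCard_pow_sub_X {π : K[X]} (hπ : Irreducible π) {n : ℕ}
    (hn : n ≠ 0) :
    multiplicity π (X ^ Nat.card K ^ n - X) = if π.natDegree ∣ n then 1 else 0 := by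
  split_ifs with hδn
  · refine multiplicity_eq_of_dvd_of_not_dvd (by simpa using
      (hπ.natDegree_dvd_iff_dvd_X_pow_card_pow_sub_X).mp hδn) fun hsq => ?_
    rw [pow_two] at hsq
    exact hπ.not_isUnit ((separable_X_pow_natCard_pow_sub_X hn).squarefree π hsq)
  · exact multiplicity_eq_zero.mpr
      (mt hπ.natDegree_dvd_of_dvd_X_pow_card_pow_sub_X hδn)

theorem multiplicity_Dcar {π : K[X]} (hπ : Irreducible π) (i : ℕ) :
    multiplicity π (Dcar (Nat.card K) K i) = carlitzVal (Nat.card K) π.natDegree i := by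
  have hq : 1 < Nat.card K := Finite.one_lt_card
  have hfin {f : K[X]} (hf : f ≠ 0) : FiniteMultiplicity π f :=
    .of_not_isUnit hπ.not_isUnit hf
  induction i with
  | zero => exact multiplicity_of_one_right hπ.not_isUnit
  | succ i ih =>
    have hB := FiniteField.X_pow_card_pow_sub_X_ne_zero K i.succ_ne_zero hq
    have hD := Dcar_ne_zero (F := K) hq i
    rw [Dcar, multiplicity_mul hπ.prime (hfin (mul_ne_zero hB (pow_ne_zero _ hD))),
      (hfin hD).multiplicity_pow hπ.prime, multiplicity_X_pow_natCard_pow_sub_X hπ i.succ_ne_zero,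
      ih, carlitzVal]

end FiniteField

theorem vpol_algebraMap_div {F : Type} [Field F] {π f g : F[X]} (hπ : Prime π) (hf : f ≠ 0)
    (hg : g ≠ 0) :
    vpol π (algebraMap F[X] (RatFunc F) f / algebraMap F[X] (RatFunc F) g)
      = (multiplicity π f : ℤ) - multiplicity π g := by
  set t := algebraMap F[X] (RatFunc F) f / algebraMap F[X] (RatFunc F) g
  have ht : t ≠ 0 := div_ne_zero (RatFunc.algebraMap_ne_zero hf) (RatFunc.algebraMap_ne_zero hg)
  have hfin {a : F[X]} (ha : a ≠ 0) : FiniteMultiplicity π a := .of_not_isUnit hπ.not_isUnit ha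
  have hcross : t.num * g = f * t.denom := (RatFunc.num_mul_eq_mul_denom_iff hg).mpr rfl
  have hmult : multiplicity π t.num + multiplicity π g
      = multiplicity π f + multiplicity π t.denom := by
    rw [← multiplicity_mul hπ (hfin (mul_ne_zero (RatFunc.num_ne_zero ht) hg)),
      ← multiplicity_mul hπ (hfin (mul_ne_zero hf t.denom_ne_zero)), hcross]
  unfold vpol
  omega

theorem Kb_eq_div_of_le (q : ℕ) (F : Type) [Field F] {k m : ℕ} (hm : m ≤ k) :
    Kb q F k m = algebraMap F[X] (RatFunc F) (Dcar q F k) /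
      algebraMap F[X] (RatFunc F) (Dcar q F m * Dcar q F (k - m) ^ q ^ m) := by
  rw [Kb, if_pos ⟨Int.natCast_nonneg m, Int.ofNat_le.mpr hm⟩, Int.toNat_natCast, map_mul,
    map_pow]

theorem vpol_Kb_nonneg {K : Type} [Field K] [Finite K] {π : K[X]} (hπ : Irreducible π)
    {k m : ℕ} (hm : m ≤ k) : 0 ≤ vpol π (Kb (Nat.card K) K k m) := by
  have hq : 1 < Nat.card K := Finite.one_lt_card
  have hD := Dcar_ne_zero (F := K) hq
  have hfin {f : K[X]} (hf : f ≠ 0) : FiniteMultiplicity π f := .of_not_isUnit hπ.not_isUnit hf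
  have hden := mul_ne_zero (hD m) (pow_ne_zero (Nat.card K ^ m) (hD (k - m)))
  rw [Kb_eq_div_of_le _ _ hm, vpol_algebraMap_div hπ.prime (hD k) hden,
    multiplicity_mul hπ.prime (hfin hden), (hfin (hD (k - m))).multiplicity_pow hπ.prime]
  simp only [multiplicity_Dcar hπ]
  have key := carlitzVal_add_le (Nat.zero_lt_of_lt hq) hπ.natDegree_pos m (k - m)
  rw [Nat.add_sub_cancel' hm] at key
  zify at key
  push_cast
  linarith

theorem Kbinom_integral_at_every_place_general
    (p e q : ℕ) [Fact p.Prime] (he : 0 < e) (hq : q = p ^ e)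
    (π : Polynomial (GaloisField p e)) (hirr : Irreducible π)
    (k m : ℕ) (hm : m ≤ k) :
    0 ≤ vpol π (Kb q (GaloisField p e) k (m : ℤ)) := by
  rw [hq, ← GaloisField.card p e he.ne']
  exact vpol_Kb_nonneg hirr hm

/-- **Integrality of `K`-binomial coefficients at every finite place (Proposition 4).**
For every monic irreducible `π ∈ F_q[x]` and `0 ≤ m ≤ k`,
`v_π(binom(k,m)_K) ≥ 0`, i.e. `|binom(k,m)_K|_π ≤ 1`. -/
theorem Kbinom_integral_at_every_place
    (p e q : ℕ) [Fact p.Prime] (he : 0 < e) (hq : q = p ^ e)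
    (π : Polynomial (GaloisField p e)) (hmon : π.Monic) (hirr : Irreducible π)
    (k m : ℕ) (hm : m ≤ k) :
    0 ≤ vpol π (Kb q (GaloisField p e) k (m : ℤ)) :=
  Kbinom_integral_at_every_place_general p e q he hq π hirr k m hm
end
end

section
/- For all integers 0 ≤ μ ≤ ν, the identity [μ+1] · binom(ν+1, μ+1)_K = [ν+1] · (binom(ν,μ)_K)^q holds in F_q(x). (This is the coefficient form of the equation d_s f = Δ_t f + [1]^{1/q} f satisfied by the generating function f(s,t) = Σ_{k≥0} Σ_{m=0}^{k} binom(k,m)_K s^{q^m} t^{q^k} of the K-binomial coefficients, which shows that f is quasi-holonomic.) -/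
noncomputable section

open Polynomial

/-- **Coefficient identity for the quasi-holonomic equation of the `K`-binomial
generating function (Proposition 7).**  For `0 ≤ μ ≤ ν`,
`[μ+1] · binom(ν+1, μ+1)_K = [ν+1] · binom(ν,μ)_K^q` in `F_q(x)`
(where `[i] = x^{q^i} − x`); this is the coefficient form of the equation
`d_s f = Δ_t f + [1]^{1/q} f` for `f(s,t) = Σ_k Σ_{m≤k} binom(k,m)_K s^{q^m} t^{q^k}`. -/
theorem Kbinom_quasiholonomic_identity
    (p e q : ℕ) [Fact p.Prime] (he : 0 < e) (hq : q = p ^ e)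
    (μ ν : ℕ) (hμν : μ ≤ ν) :
    algebraMap (Polynomial (GaloisField p e)) (RatFunc (GaloisField p e))
        (X ^ q ^ (μ + 1) - X) * Kb q (GaloisField p e) (ν + 1) ((μ : ℤ) + 1)
      = algebraMap (Polynomial (GaloisField p e)) (RatFunc (GaloisField p e))
          (X ^ q ^ (ν + 1) - X) * Kb q (GaloisField p e) ν (μ : ℤ) ^ q := by
  set F := GaloisField p e
  have hq1 : 1 < q := by
    rw [hq]; exact Nat.one_lt_pow he.ne' (Fact.out (p := p.Prime)).one_lt
  have hbr : ∀ i : ℕ, (X ^ q ^ (i + 1) - X : Polynomial F) ≠ 0 := by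
    intro i
    refine sub_ne_zero.mpr fun h => ?_
    have := congrArg natDegree h
    simp only [natDegree_X_pow, natDegree_X] at this
    have : 1 < q ^ (i + 1) := Nat.one_lt_pow (Nat.succ_ne_zero i) hq1
    omega
  have hD : ∀ i : ℕ, Dcar q F i ≠ 0 := by
    intro i
    induction i with
    | zero => simp [Dcar]
    | succ n ih =>
      simp only [Dcar]
      exact mul_ne_zero (hbr n) (pow_ne_zero _ ih)
  have halg : ∀ r : Polynomial F, r ≠ 0 →
      algebraMap (Polynomial F) (RatFunc F) r ≠ 0 := fun r hr =>
    RatFunc.algebraMap_ne_zero hr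
  have h1 : (0 : ℤ) ≤ (μ : ℤ) + 1 ∧ (μ : ℤ) + 1 ≤ ((ν + 1 : ℕ) : ℤ) := by
    constructor <;> [positivity; (push_cast; omega)]
  have h2 : (0 : ℤ) ≤ (μ : ℤ) ∧ (μ : ℤ) ≤ ((ν : ℕ) : ℤ) := by
    constructor <;> [positivity; exact_mod_cast hμν]
  rw [Kb, if_pos h1, Kb, if_pos h2]
  have ht1 : ((μ : ℤ) + 1).toNat = μ + 1 := by omega
  have ht2 : ((μ : ℤ)).toNat = μ := by omega
  rw [ht1, ht2]
  have hsub : ν + 1 - (μ + 1) = ν - μ := by omega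
  rw [hsub]
  have hDν1 : Dcar q F (ν + 1) = (X ^ q ^ (ν + 1) - X) * (Dcar q F ν) ^ q := rfl
  have hDμ1 : Dcar q F (μ + 1) = (X ^ q ^ (μ + 1) - X) * (Dcar q F μ) ^ q := rfl
  rw [hDν1, hDμ1, map_mul, map_mul, map_pow, map_pow]
  set A := algebraMap (Polynomial F) (RatFunc F) (X ^ q ^ (μ + 1) - X) with hA
  set B := algebraMap (Polynomial F) (RatFunc F) (X ^ q ^ (ν + 1) - X) with hB
  set C := algebraMap (Polynomial F) (RatFunc F) (Dcar q F ν) with hC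
  set D := algebraMap (Polynomial F) (RatFunc F) (Dcar q F μ) with hDd
  set E := algebraMap (Polynomial F) (RatFunc F) (Dcar q F (ν - μ)) with hE
  have hA0 : A ≠ 0 := halg _ (hbr μ)
  have hD0 : D ≠ 0 := halg _ (hD μ)
  have hE0 : E ≠ 0 := halg _ (hD (ν - μ))
  have hps : (E ^ q ^ μ) ^ q = E ^ q ^ (μ + 1) := by
    rw [← pow_mul, ← pow_succ]
  rw [div_pow, mul_pow, hps]
  rw [mul_assoc A (D ^ q), mul_div_assoc']
  rw [mul_div_mul_left _ _ hA0, mul_div_assoc]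
end
end

section
/- Every map F̂_{n+1} → F̂_{n+1} obtained as a finite composition of operators from the set {τ, d_s, Δ₁, …, Δ_n} together with scalar-multiplication operators f ↦ λ·f (λ ∈ L) lies in the L-linear span (inside Maps(F̂_{n+1}, F̂_{n+1})) of the monomial operators τ^l ∘ d_s^μ ∘ Δ₁^{i₁} ∘ … ∘ Δ_n^{i_n}; that is, every element of the Carlitz ring 𝔄_{n+1} can be written as a finite sum Σ c_{l,μ,i₁,…,i_n}·τ^l d_s^μ Δ₁^{i₁} ⋯ Δ_n^{i_n} with coefficients in L. -/
/-!
The three generators act on the monomial basis as weighted shifts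
`a • e i ↦ (w i * σ a) • e (s i)`: `τ` with shift `(m, k⃗) ↦ (m+1, k⃗+1)` and `σ` the `q`-th power,
`d_s` with the opposite shift and `σ` the `q`-th root, `Δ_j` diagonal. Weighted shifts compose by
composing shifts and twisting weights, so the commutation relations
`d_s τ = τ d_s + [1]^{1/q}`, `Δ_j τ = τ Δ_j + [1] τ` and `d_s Δ_j = Δ_j d_s + [1]^{1/q} d_s`
reduce to the bracket identity `[m+1] = [m]^q + [1]`, and `Δ₁^{i₁} ⋯ Δ_n^{i_n}` is the diagonal
operator with weight `∏ [k_j]^{i_j}`. As every generator is semilinear, these relations let one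
move a generator past `τ^l d_s^μ` by induction on `l` and `μ`: the span of the monomial operators
is stable under left composition by the generators, hence contains every word in them.
-/

open Finsupp

section WeightedShift

variable {ι K : Type*} [CommSemiring K]

noncomputable def weightedShift (s : ι → ι) (w : ι → K) (σ : K →+* K) :
    (ι →₀ K) →+ (ι →₀ K) where
  toFun f := f.sum fun i a => single (s i) (w i * σ a)
  map_zero' := sum_zero_index
  map_add' f g := sum_add_index' (fun i => by simp) fun i a b => by simp [mul_add]

theorem weightedShift_apply (s : ι → ι) (w : ι → K) (σ : K →+* K) (f : ι →₀ K) :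
    weightedShift s w σ f = f.sum fun i a => single (s i) (w i * σ a) := rfl

@[simp]
theorem weightedShift_single (s : ι → ι) (w : ι → K) (σ : K →+* K) (i : ι) (a : K) :
    weightedShift s w σ (single i a) = single (s i) (w i * σ a) := by
  rw [weightedShift_apply, sum_single_index (by simp)]

theorem weightedShift_smul (s : ι → ι) (w : ι → K) (σ : K →+* K) (c : K) (f : ι →₀ K) :
    weightedShift s w σ (c • f) = σ c • weightedShift s w σ f := by
  induction f using Finsupp.induction_linear with
  | zero => simp
  | add f g hf hg => simp_all
  | single i a => simp [mul_left_comm, -single_mul]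

theorem weightedShift_comp (s s' : ι → ι) (w w' : ι → K) (σ σ' : K →+* K) :
    ⇑(weightedShift s w σ) ∘ ⇑(weightedShift s' w' σ') =
      ⇑(weightedShift (s ∘ s') (fun i => w (s' i) * σ (w' i)) (σ.comp σ')) :=
  congrArg DFunLike.coe <| addHom_ext (f := (weightedShift s w σ).comp (weightedShift s' w' σ'))
    fun i a => by simp [mul_assoc, -single_mul]

theorem weightedShift_add_weight (s : ι → ι) (w w' : ι → K) (σ : K →+* K) :
    ⇑(weightedShift s (w + w') σ) = ⇑(weightedShift s w σ) + ⇑(weightedShift s w' σ) :=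
  congrArg DFunLike.coe <| addHom_ext (g := weightedShift s w σ + weightedShift s w' σ)
    fun i a => by simp [add_mul]

theorem weightedShift_smul_weight (s : ι → ι) (c : K) (w : ι → K) (σ : K →+* K) :
    ⇑(weightedShift s (c • w) σ) = c • ⇑(weightedShift s w σ) :=
  congrArg DFunLike.coe <| addHom_ext (g := c • weightedShift s w σ)
    fun i a => by simp [mul_assoc, -single_mul]

theorem weightedShift_congr_shift {s s' : ι → ι} {w : ι → K} (σ : K →+* K)
    (h : ∀ i, w i ≠ 0 → s i = s' i) : weightedShift s w σ = weightedShift s' w σ :=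
  addHom_ext fun i a => by
    by_cases hw : w i = 0
    · simp [hw]
    · simp [h i hw]

theorem weightedShift_id_one : ⇑(weightedShift id (1 : ι → K) (RingHom.id K)) = id :=
  congrArg DFunLike.coe <| addHom_ext (g := AddMonoidHom.id _) fun i a => by simp

theorem weightedShift_id_iterate (w : ι → K) (k : ℕ) :
    (⇑(weightedShift id w (RingHom.id K)))^[k] = ⇑(weightedShift id (w ^ k) (RingHom.id K)) := by
  induction k with
  | zero => simp [weightedShift_id_one]
  | succ k ih =>
    rw [Function.iterate_succ', ih, weightedShift_comp]
    simp [pow_succ', Pi.mul_def]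

theorem foldr_weightedShift_id (ws : List (ι → K)) :
    (ws.map fun w => ⇑(weightedShift id w (RingHom.id K))).foldr (· ∘ ·) id =
      ⇑(weightedShift id ws.prod (RingHom.id K)) := by
  induction ws with
  | nil => simp [weightedShift_id_one]
  | cons w ws ih =>
    rw [List.map_cons, List.foldr_cons, ih, weightedShift_comp]
    simp [Pi.mul_def]

end WeightedShift

def RingHom.ofRightInverse {R S : Type*} [NonAssocSemiring R] [NonAssocSemiring S] (f : R →+* S)
    (hf : Function.Injective f) (g : S → R) (hg : ∀ c, f (g c) = c) : S →+* R where
  toFun := g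
  map_one' := hf (by rw [hg, map_one])
  map_mul' a b := hf (by rw [hg, map_mul, hg, hg])
  map_zero' := hf (by rw [hg, map_zero])
  map_add' a b := hf (by rw [hg, map_add, hg, hg])

section CarlitzBracket

variable {L : Type*} [Field L] {q : ℕ} (frob : L →+* L) (hfrob : ∀ a, frob a = a ^ q)
  (ρ : L →+* L) (hρ : ∀ c, frob (ρ c) = c) (x : L)

def carlitzBracket (x : L) (q m : ℕ) : L := x ^ q ^ m - x

@[simp]
theorem carlitzBracket_zero : carlitzBracket x q 0 = 0 := by simp [carlitzBracket]

include hfrob in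
theorem carlitzBracket_succ (m : ℕ) :
    carlitzBracket x q (m + 1) = frob (carlitzBracket x q m) + carlitzBracket x q 1 := by
  have hpow : frob (x ^ q ^ m) = x ^ q ^ (m + 1) := by rw [hfrob, ← pow_mul, ← pow_succ]
  simp only [carlitzBracket, map_sub, hpow, hfrob x, pow_one]
  ring

include hfrob hρ in
theorem carlitzBracket_succ_of_rightInverse (m : ℕ) :
    ρ (carlitzBracket x q (m + 1)) = carlitzBracket x q m + ρ (carlitzBracket x q 1) :=
  frob.injective <| by rw [hρ, map_add, hρ, carlitzBracket_succ frob hfrob]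

end CarlitzBracket

section CarlitzOperators

variable {n : ℕ}

@[simp] theorem shiftUp_val_fst (i : CIdx n) : (shiftUp i).1.1 = i.1.1 + 1 := rfl
@[simp] theorem shiftUp_val_snd (i : CIdx n) (j : Fin n) : (shiftUp i).1.2 j = i.1.2 j + 1 := rfl
@[simp] theorem shiftDown_val_fst (i : CIdx n) : (shiftDown i).1.1 = i.1.1 - 1 := rfl
@[simp] theorem shiftDown_val_snd (i : CIdx n) (j : Fin n) :
    (shiftDown i).1.2 j = i.1.2 j - 1 := rfl

@[simp]
theorem shiftDown_comp_shiftUp : shiftDown ∘ shiftUp = (id : CIdx n → CIdx n) :=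
  funext fun _ => Subtype.ext (by simp [shiftDown, shiftUp])

theorem shiftUp_shiftDown {i : CIdx n} (hi : i.1.1 ≠ 0) : shiftUp (shiftDown i) = i := by
  refine Subtype.ext (Prod.ext (by simp; omega) (funext fun j => ?_))
  have := i.2 j
  simp only [shiftUp_val_snd, shiftDown_val_snd]
  omega

theorem weightedShift_shiftUp_comp_shiftDown {K : Type*} [CommSemiring K] {w : CIdx n → K}
    (σ : K →+* K) (hw : ∀ i : CIdx n, i.1.1 = 0 → w i = 0) :
    weightedShift (shiftUp ∘ shiftDown) w σ = weightedShift id w σ :=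
  weightedShift_congr_shift σ fun _ hi => shiftUp_shiftDown fun h => hi (hw _ h)

variable {L : Type} [Field L] {q : ℕ} (frob : L →+* L) (hfrob : ∀ a, frob a = a ^ q)
  (ρ : L →+* L) (x : L)

include hfrob in
theorem tauOp_eq_weightedShift : tauOp L q n = ⇑(weightedShift shiftUp 1 frob) :=
  funext fun f => by
    rw [weightedShift_apply]
    exact sum_congr fun i _ => by rw [Pi.one_apply, one_mul, hfrob]

theorem dsOp_eq_weightedShift : dsOp L ρ x q n =
    ⇑(weightedShift shiftDown (fun i => ρ (carlitzBracket x q i.1.1)) ρ) := rfl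

theorem deltaOp_eq_weightedShift (j : Fin n) : deltaOp L x q n j =
    ⇑(weightedShift id (fun i => carlitzBracket x q (i.1.2 j)) (RingHom.id L)) := rfl

end CarlitzOperators

section Relations

variable {n : ℕ} {L : Type} [Field L] {q : ℕ} (frob : L →+* L) (hfrob : ∀ a, frob a = a ^ q)
  (ρ : L →+* L) (hρ : ∀ c, frob (ρ c) = c) (x : L)

include hfrob hρ in
theorem dsOp_comp_tauOp :
    dsOp L ρ x q n ∘ tauOp L q n =
      tauOp L q n ∘ dsOp L ρ x q n + ρ (carlitzBracket x q 1) • id := by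
  have hρfrob : ρ.comp frob = RingHom.id L := RingHom.ext fun a => frob.injective (hρ _)
  have hfrobρ : frob.comp ρ = RingHom.id L := RingHom.ext hρ
  rw [tauOp_eq_weightedShift frob hfrob, dsOp_eq_weightedShift,
    weightedShift_comp, weightedShift_comp]
  simp only [hρfrob, hfrobρ, shiftDown_comp_shiftUp, Pi.one_apply, map_one, mul_one, one_mul, hρ,
    shiftUp_val_fst]
  rw [weightedShift_shiftUp_comp_shiftDown _ fun i hi => by simp [hi],
    ← weightedShift_id_one, ← weightedShift_smul_weight, ← weightedShift_add_weight]
  congr 2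
  funext i
  simp [carlitzBracket_succ_of_rightInverse frob hfrob ρ hρ x i.1.1]

include hfrob in
theorem deltaOp_comp_tauOp (j : Fin n) :
    deltaOp L x q n j ∘ tauOp L q n =
      tauOp L q n ∘ deltaOp L x q n j + carlitzBracket x q 1 • tauOp L q n := by
  rw [tauOp_eq_weightedShift frob hfrob, deltaOp_eq_weightedShift,
    weightedShift_comp, weightedShift_comp, ← weightedShift_smul_weight]
  simp only [Function.id_comp, Function.comp_id, RingHom.id_comp, RingHom.comp_id, Pi.one_apply,
    mul_one, one_mul, RingHom.id_apply, shiftUp_val_snd]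
  rw [← weightedShift_add_weight]
  congr 2
  funext i
  simp [carlitzBracket_succ frob hfrob x (i.1.2 j)]

include hfrob hρ in
theorem dsOp_comp_deltaOp (j : Fin n) :
    dsOp L ρ x q n ∘ deltaOp L x q n j =
      deltaOp L x q n j ∘ dsOp L ρ x q n + ρ (carlitzBracket x q 1) • dsOp L ρ x q n := by
  rw [dsOp_eq_weightedShift, deltaOp_eq_weightedShift, weightedShift_comp, weightedShift_comp,
    ← weightedShift_smul_weight]
  simp only [Function.id_comp, Function.comp_id, RingHom.id_comp, RingHom.comp_id,
    RingHom.id_apply, id, shiftDown_val_snd]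
  rw [← weightedShift_add_weight]
  congr 2
  funext i
  obtain hm | hm := eq_or_ne i.1.1 0
  · simp [hm]
  obtain ⟨k, hk⟩ : ∃ k, i.1.2 j = k + 1 := ⟨i.1.2 j - 1, by have := i.2 j; omega⟩
  simp [hk, carlitzBracket_succ_of_rightInverse frob hfrob ρ hρ x k]
  ring

end Relations

theorem Finset.prod_pow_update_succ {ι M : Type*} [Fintype ι] [DecidableEq ι] [CommMonoid M]
    (a : ι → M) (e : ι → ℕ) (j : ι) :
    ∏ i, a i ^ Function.update e j (e j + 1) i = a j * ∏ i, a i ^ e i := by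
  simp only [Function.apply_update (fun i k => a i ^ k)]
  rw [Finset.prod_update_of_mem (Finset.mem_univ j),
    Finset.prod_eq_mul_prod_sdiff_singleton j (fun i => a i ^ e i) (absurd (Finset.mem_univ j)),
    pow_succ', mul_assoc]

section Monomials

variable {n : ℕ} {L : Type} [Field L] {q : ℕ} (ρ : L →+* L) (x : L)

theorem monOp_succ (l μ : ℕ) (iv : Fin n → ℕ) :
    monOp L ρ x q n (l + 1) μ iv = tauOp L q n ∘ monOp L ρ x q n l μ iv := by
  rw [monOp, Function.iterate_succ']
  rfl

theorem monOp_zero_succ (μ : ℕ) (iv : Fin n → ℕ) :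
    monOp L ρ x q n 0 (μ + 1) iv = dsOp L ρ x q n ∘ monOp L ρ x q n 0 μ iv := by
  rw [monOp, Function.iterate_succ']
  rfl

theorem monOp_zero_zero (iv : Fin n → ℕ) :
    monOp L ρ x q n 0 0 iv =
      ⇑(weightedShift id (fun i => ∏ j, carlitzBracket x q (i.1.2 j) ^ iv j) (RingHom.id L)) := by
  have hfactors : (List.ofFn fun j => (deltaOp L x q n j)^[iv j]) =
      (List.ofFn fun j i => carlitzBracket x q (i.1.2 j) ^ iv j).map
        fun w => ⇑(weightedShift id w (RingHom.id L)) := by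
    simp only [List.map_ofFn, deltaOp_eq_weightedShift, weightedShift_id_iterate]
    rfl
  rw [monOp, Function.iterate_zero, Function.iterate_zero, Function.id_comp, Function.id_comp,
    hfactors, foldr_weightedShift_id, List.prod_ofFn]
  congr 2
  funext i
  exact Finset.prod_apply i _ _

theorem deltaOp_comp_monOp_zero_zero (j : Fin n) (iv : Fin n → ℕ) :
    deltaOp L x q n j ∘ monOp L ρ x q n 0 0 iv =
      monOp L ρ x q n 0 0 (Function.update iv j (iv j + 1)) := by
  rw [monOp_zero_zero, monOp_zero_zero, deltaOp_eq_weightedShift, weightedShift_comp]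
  simp only [Function.id_comp, RingHom.id_comp, RingHom.id_apply, id,
    Finset.prod_pow_update_succ]

end Monomials

theorem comp_mem_span_of_semilinear {K V X : Type*} [Semiring K] [AddCommMonoid V] [Module K V]
    {σ : K →+* K} (T : V →+ V) (hT : ∀ (c : K) (v : V), T (c • v) = σ c • T v)
    {s t : Set (X → V)} (hs : ∀ P ∈ s, ⇑T ∘ P ∈ Submodule.span K t) {P : X → V}
    (hP : P ∈ Submodule.span K s) : ⇑T ∘ P ∈ Submodule.span K t := by
  induction hP using Submodule.span_induction with
  | mem P hP => exact hs P hP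
  | zero =>
    have hzero : ⇑T ∘ (0 : X → V) = 0 := funext fun _ => map_zero T
    rw [hzero]
    exact zero_mem _
  | add P Q _ _ hP hQ =>
    have hadd : ⇑T ∘ (P + Q) = ⇑T ∘ P + ⇑T ∘ Q := funext fun _ => map_add T _ _
    rw [hadd]
    exact add_mem hP hQ
  | smul c P _ hP =>
    have hsmul : ⇑T ∘ (c • P) = σ c • (⇑T ∘ P) := funext fun _ => hT _ _
    rw [hsmul]
    exact Submodule.smul_mem _ _ hP

def carlitzMonomials (L : Type) [Field L] (root : L → L) (x : L) (q n : ℕ) :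
    Set ((CIdx n →₀ L) → (CIdx n →₀ L)) :=
  {T | ∃ (l μ : ℕ) (iv : Fin n → ℕ), T = monOp L root x q n l μ iv}

section Span

variable {n : ℕ} {L : Type} [Field L] {q : ℕ} (frob : L →+* L) (hfrob : ∀ a, frob a = a ^ q)
  (ρ : L →+* L) (hρ : ∀ c, frob (ρ c) = c) (x : L)

local notation "𝔄" => Submodule.span L (carlitzMonomials L ρ x q n)

theorem monOp_mem_span (l μ : ℕ) (iv : Fin n → ℕ) : monOp L ρ x q n l μ iv ∈ 𝔄 :=
  Submodule.subset_span ⟨l, μ, iv, rfl⟩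

theorem id_mem_span : id ∈ 𝔄 := by
  have hid : monOp L ρ x q n 0 0 0 = id := by
    rw [monOp_zero_zero]
    simp only [Pi.zero_apply, pow_zero, Finset.prod_const_one]
    exact weightedShift_id_one
  exact hid ▸ monOp_mem_span ρ x 0 0 0

include hfrob in
theorem tauOp_comp_mem_span {P : (CIdx n →₀ L) → (CIdx n →₀ L)} (hP : P ∈ 𝔄) :
    tauOp L q n ∘ P ∈ 𝔄 := by
  rw [tauOp_eq_weightedShift frob hfrob]
  refine comp_mem_span_of_semilinear _ (weightedShift_smul _ _ _) ?_ hP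
  rintro _ ⟨l, μ, iv, rfl⟩
  rw [← tauOp_eq_weightedShift frob hfrob, ← monOp_succ]
  exact monOp_mem_span ρ x _ _ _

include hfrob hρ in
theorem dsOp_comp_monOp_mem_span (l μ : ℕ) (iv : Fin n → ℕ) :
    dsOp L ρ x q n ∘ monOp L ρ x q n l μ iv ∈ 𝔄 := by
  induction l with
  | zero => exact monOp_zero_succ ρ x μ iv ▸ monOp_mem_span ρ x 0 (μ + 1) iv
  | succ l ih =>
    rw [monOp_succ, ← Function.comp_assoc, dsOp_comp_tauOp frob hfrob ρ hρ, Pi.add_comp,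
      Pi.smul_comp, Function.comp_assoc, Function.id_comp]
    exact add_mem (tauOp_comp_mem_span frob hfrob ρ x ih)
      (Submodule.smul_mem _ _ (monOp_mem_span ρ x l μ iv))

include hfrob hρ in
theorem dsOp_comp_mem_span {P : (CIdx n →₀ L) → (CIdx n →₀ L)} (hP : P ∈ 𝔄) :
    dsOp L ρ x q n ∘ P ∈ 𝔄 := by
  refine comp_mem_span_of_semilinear _ (weightedShift_smul _ _ ρ) ?_ hP
  rintro _ ⟨l, μ, iv, rfl⟩
  exact dsOp_comp_monOp_mem_span frob hfrob ρ hρ x l μ iv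

include hfrob hρ in
theorem deltaOp_comp_monOp_mem_span (j : Fin n) (l μ : ℕ) (iv : Fin n → ℕ) :
    deltaOp L x q n j ∘ monOp L ρ x q n l μ iv ∈ 𝔄 := by
  induction l with
  | zero =>
    induction μ with
    | zero => exact deltaOp_comp_monOp_zero_zero ρ x j iv ▸ monOp_mem_span ρ x _ _ _
    | succ μ ih =>
      have hcomm := eq_sub_of_add_eq (dsOp_comp_deltaOp frob hfrob ρ hρ x j (n := n)).symm
      rw [monOp_zero_succ, ← Function.comp_assoc, hcomm, Pi.sub_comp, Pi.smul_comp,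
        Function.comp_assoc, ← monOp_zero_succ]
      exact sub_mem (dsOp_comp_mem_span frob hfrob ρ hρ x ih)
        (Submodule.smul_mem _ _ (monOp_mem_span ρ x 0 (μ + 1) iv))
  | succ l ih =>
    rw [monOp_succ, ← Function.comp_assoc, deltaOp_comp_tauOp frob hfrob x j, Pi.add_comp,
      Pi.smul_comp, Function.comp_assoc, ← monOp_succ]
    exact add_mem (tauOp_comp_mem_span frob hfrob ρ x ih)
      (Submodule.smul_mem _ _ (monOp_mem_span ρ x (l + 1) μ iv))

include hfrob hρ in
theorem deltaOp_comp_mem_span (j : Fin n) {P : (CIdx n →₀ L) → (CIdx n →₀ L)} (hP : P ∈ 𝔄) :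
    deltaOp L x q n j ∘ P ∈ 𝔄 := by
  refine comp_mem_span_of_semilinear _ (weightedShift_smul _ _ (RingHom.id L)) ?_ hP
  rintro _ ⟨l, μ, iv, rfl⟩
  exact deltaOp_comp_monOp_mem_span frob hfrob ρ hρ x j l μ iv

end Span

theorem carlitz_ring_canonical_form_general
    (p e q : ℕ) [Fact p.Prime] (hq : q = p ^ e)
    (L : Type) [Field L] [CharP L p]
    (root : L → L) (hroot1 : ∀ c, root c ^ q = c)
    (n : ℕ) (x : L)
    (ops : List ((CIdx n →₀ L) → (CIdx n →₀ L)))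
    (hops : ∀ T ∈ ops, T = tauOp L q n ∨ T = dsOp L root x q n ∨
      (∃ j : Fin n, T = deltaOp L x q n j) ∨ (∃ lam : L, T = fun f => lam • f)) :
    ops.foldr (· ∘ ·) id ∈ Submodule.span L
      {T : (CIdx n →₀ L) → (CIdx n →₀ L) |
        ∃ (l μ : ℕ) (iv : Fin n → ℕ), T = monOp L root x q n l μ iv} := by
  set frob := iterateFrobenius L p e
  have hfrob : ∀ a, frob a = a ^ q := fun a => by rw [iterateFrobenius_def, hq]
  have hroot : ∀ c, frob (root c) = c := fun c => by rw [hfrob, hroot1]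
  set ρ := frob.ofRightInverse frob.injective root hroot
  -- `⇑ρ` unfolds to `root`, so this only repackages the goal (and `hops`) in terms of `ρ`.
  change ops.foldr (· ∘ ·) id ∈ Submodule.span L (carlitzMonomials L ρ x q n)
  induction ops with
  | nil => exact id_mem_span ρ x
  | cons T ops ih =>
    have hP := ih fun T hT => hops T (List.mem_cons_of_mem _ hT)
    rcases hops T List.mem_cons_self with rfl | rfl | ⟨j, rfl⟩ | ⟨c, rfl⟩
    · exact tauOp_comp_mem_span frob hfrob ρ x hP
    · exact dsOp_comp_mem_span frob hfrob ρ hroot x hP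
    · exact deltaOp_comp_mem_span frob hfrob ρ hroot x j hP
    · exact Submodule.smul_mem _ c hP

/-- **Canonical form of elements of the Carlitz ring `𝔄_{n+1}` (relation (10)).**
Every finite composition of the generators `τ, d_s, Δ₁, …, Δ_n` and scalar
multiplications lies in the `L`-linear span of the monomial operators
`τ^l ∘ d_s^μ ∘ Δ₁^{i₁} ∘ … ∘ Δ_n^{i_n}`. -/
theorem carlitz_ring_canonical_form
    (p e q : ℕ) [Fact p.Prime] (he : 0 < e) (hq : q = p ^ e)
    (L : Type) [Field L] [IsAlgClosed L] [CharP L p]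
    (φ : RatFunc (GaloisField p e) →+* L)
    (root : L → L) (hroot1 : ∀ c, root c ^ q = c) (hroot2 : ∀ c, root (c ^ q) = c)
    (n : ℕ) (x : L) (hx : x = φ RatFunc.X)
    (ops : List ((CIdx n →₀ L) → (CIdx n →₀ L)))
    (hops : ∀ T ∈ ops, T = tauOp L q n ∨ T = dsOp L root x q n ∨
      (∃ j : Fin n, T = deltaOp L x q n j) ∨ (∃ lam : L, T = fun f => lam • f)) :
    ops.foldr (· ∘ ·) id ∈ Submodule.span L
      {T : (CIdx n →₀ L) → (CIdx n →₀ L) |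
        ∃ (l μ : ℕ) (iv : Fin n → ℕ), T = monOp L root x q n l μ iv} :=
  carlitz_ring_canonical_form_general p e q hq L root hroot1 n x ops hops
end
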